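/- Let β₁, β₂, δ₁, δ₂ ≥ 0 with β₁+δ₁ > 0, β₂+δ₂ > 0, α₁, α₂, γ₁, γ₂ > 0, |σ| < 1, 0 ≤ α < 1, and suppose |A_n| ≤ (n+1)/2 and |B_n| ≤ (n−1)/2 for all n ≥ 1. If (W'''_{(α₁,β₁),(γ₁,δ₁)}(1) + (4−α) W''_{(α₁,β₁),(γ₁,δ₁)}(1) + 2(1−α)(W'_{(α₁,β₁),(γ₁,δ₁)}(1) − 1)) + |σ|(W'''_{(α₂,β₂),(γ₂,δ₂)}(1) + (2+α) W''_{(α₂,β₂),(γ₂,δ₂)}(1)) ≤ 2(1−α), then ∑_{n=2}^∞ n(n−α) Γ(α₁)Γ(γ₁)|A_n| / (Γ(α₁+(n−1)β₁)Γ(γ₁+(n−1)δ₁)) + |σ| ∑_{n=1}^∞ n(n+α) Γ(α₂)Γ(γ₂)|B_n| / (Γ(α₂+(n−1)β₂)Γ(γ₂+(n−1)δ₂)) ≤ 1 − α. -/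

import Mathlib

/-- The normalized four-parameter Wright function
`W_{(a,b),(c,d)}(x) = x + ∑_{n=2}^∞ Γ(a)Γ(c) xⁿ / (Γ(a+(n-1)b)Γ(c+(n-1)d))`
(as a function of a real variable, evaluated along the real axis). -/
noncomputable def wrightW (a b c d : ℝ) : ℝ → ℝ := fun x =>
  x + ∑' n : ℕ, Real.Gamma a * Real.Gamma c /
    (Real.Gamma (a + ((n : ℝ) + 1) * b) * Real.Gamma (c + ((n : ℝ) + 1) * d)) * x ^ (n + 2)

/-!
Since `Γ` is log-convex, `Γ y ≥ L ^ (y - L - 1)` for `y ≥ L + 1`, so the Wright coefficients decay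
faster than any geometric sequence. Hence `W` is entire and its derivatives at `1` are obtained by
termwise differentiation; with `cₙ` the coefficient of `xⁿ` this gives
`W'''(1) + (4 - α) W''(1) + 2 (1 - α) (W'(1) - 1) = ∑_{n ≥ 2} n (n + 1) (n - α) cₙ` and
`W'''(1) + (2 + α) W''(1) = ∑_{n ≥ 2} n (n - 1) (n + α) cₙ`.
The bounds `|Aₙ| ≤ (n + 1) / 2` and `|Bₙ| ≤ (n - 1) / 2` compare the two sums of the conclusion
termwise with half of these.
-/

namespace Real

theorem one_le_Gamma_of_two_le {x : ℝ} (hx : 2 ≤ x) : 1 ≤ Gamma x := by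
  simpa [Gamma_two] using Gamma_strictMonoOn_Ici.monotoneOn (Set.mem_Ici.2 le_rfl) hx hx

theorem one_div_six_le_Gamma {x : ℝ} (hx : 0 < x) : 1 / 6 ≤ Gamma x := by
  rcases le_or_gt 2 x with h | h
  · linarith [one_le_Gamma_of_two_le h]
  · have h1 : 1 ≤ (x + 1) * (x * Gamma x) := by
      rw [← Gamma_add_one hx.ne', ← Gamma_add_one (by linarith)]
      exact one_le_Gamma_of_two_le (by linarith)
    have h6 : (x + 1) * x < 6 := by nlinarith
    nlinarith [mul_lt_mul_of_pos_right h6 (Gamma_pos_of_pos hx)]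

theorem rpow_le_Gamma {L x : ℝ} (hL : 1 ≤ L) (hx : L + 1 ≤ x) : L ^ (x - L - 1) ≤ Gamma x := by
  have hL0 : 0 < L := by linarith
  have hΓ : 0 ≤ log (Gamma (L + 1)) := log_nonneg (one_le_Gamma_of_two_le (by linarith))
  rcases hx.eq_or_lt with rfl | hx
  · simpa using one_le_Gamma_of_two_le (by linarith)
  -- `log ∘ Gamma` is convex and its slope on `[L, L + 1]` is `log L`.
  have hslope := convexOn_log_Gamma.slope_mono_adjacent (x := L) (y := L + 1) (z := x)
    hL0 (by simp only [Set.mem_Ioi]; linarith) (by linarith) hx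
  have hstep : log (Gamma (L + 1)) - log (Gamma L) = log L := by
    rw [Gamma_add_one hL0.ne', log_mul hL0.ne' (Gamma_pos_of_pos hL0).ne']; ring
  simp only [Function.comp_apply] at hslope
  rw [hstep, add_sub_cancel_left, div_one, le_div_iff₀ (by linarith)] at hslope
  rw [rpow_def_of_pos hL0, ← exp_log (Gamma_pos_of_pos (by linarith : 0 < x))]
  exact exp_le_exp.2 (by nlinarith)

theorem rpow_div_six_le_Gamma {L x : ℝ} (hL : 1 ≤ L) (hx : 0 < x) :
    L ^ (x - L - 1) / 6 ≤ Gamma x := by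
  rcases le_or_gt (L + 1) x with h | h
  · linarith [rpow_le_Gamma hL h, rpow_nonneg (by linarith : 0 ≤ L) (x - L - 1)]
  · linarith [one_div_six_le_Gamma hx,
      rpow_le_one_of_one_le_of_nonpos hL (by linarith : x - L - 1 ≤ 0)]

end Real

open Real
open scoped Nat

section PowerSeries

theorem norm_descFactorial_mul_mul_pow_sub_le (c : ℕ → ℝ) {R y : ℝ} (hR : 1 ≤ R) (hy : |y| ≤ R)
    (n k : ℕ) :
    ‖(n.descFactorial k : ℝ) * c n * y ^ (n - k)‖ ≤ n.descFactorial k * ‖c n‖ * R ^ n := by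
  rw [norm_mul, norm_mul, norm_pow, norm_natCast, norm_eq_abs y]
  gcongr
  exact (pow_le_pow_left₀ (abs_nonneg y) hy _).trans (pow_le_pow_right₀ hR (Nat.sub_le n k))

variable {c : ℕ → ℝ}

variable (hc : ∀ R : ℝ, Summable fun n => ‖c n‖ * R ^ n)
include hc

theorem summable_descFactorial_mul_norm_mul_pow (k : ℕ) {R : ℝ} (hR : 0 ≤ R) :
    Summable fun n => (n.descFactorial k : ℝ) * ‖c n‖ * R ^ n := by
  refine .of_nonneg_of_le (fun n => by positivity) (fun n => ?_)
    ((hc (exp 1 * R)).mul_left (k ! : ℝ))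
  have hexp : (n.descFactorial k : ℝ) ≤ k ! * exp 1 ^ n := by
    have := pow_div_factorial_le_exp (n : ℝ) n.cast_nonneg k
    rw [div_le_iff₀ (by positivity)] at this
    calc (n.descFactorial k : ℝ) ≤ (n : ℝ) ^ k := by exact_mod_cast n.descFactorial_le_pow k
      _ ≤ k ! * exp 1 ^ n := by rw [exp_one_pow]; linarith
  calc _ ≤ (k ! * exp 1 ^ n) * ‖c n‖ * R ^ n := by gcongr
    _ = _ := by rw [mul_pow]; ring

theorem hasDerivAt_tsum_descFactorial_mul_pow (k : ℕ) (x : ℝ) :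
    HasDerivAt (fun y => ∑' n, (n.descFactorial k : ℝ) * c n * y ^ (n - k))
      (∑' n, (n.descFactorial (k + 1) : ℝ) * c n * x ^ (n - (k + 1))) x := by
  set R := |x| + 1
  have hR : 1 ≤ R := le_add_of_nonneg_left (abs_nonneg x)
  have hx : x ∈ Metric.ball (0 : ℝ) R := by simp [R]
  have hball : ∀ y ∈ Metric.ball (0 : ℝ) R, |y| ≤ R := fun y hy => by
    simpa using (mem_ball_zero_iff.1 hy).le
  refine hasDerivAt_tsum_of_isPreconnected
    (summable_descFactorial_mul_norm_mul_pow hc (k + 1) (by positivity)) Metric.isOpen_ball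
    (convex_ball 0 R).isPreconnected (fun n y _ => ?_)
    (fun n y hy => norm_descFactorial_mul_mul_pow_sub_le c hR (hball y hy) n (k + 1)) hx
    (.of_norm_bounded (summable_descFactorial_mul_norm_mul_pow hc k (by positivity))
      fun n => norm_descFactorial_mul_mul_pow_sub_le c hR (hball x hx) n k) hx
  refine ((hasDerivAt_pow (n - k) y).const_mul _).congr_deriv ?_
  rw [Nat.descFactorial_succ, Nat.sub_sub]
  push_cast
  ring

theorem iteratedDeriv_tsum_mul_pow (k : ℕ) :
    iteratedDeriv k (fun y => ∑' n, c n * y ^ n) =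
      fun x => ∑' n, (n.descFactorial k : ℝ) * c n * x ^ (n - k) := by
  induction k with
  | zero => simp
  | succ k ih =>
    ext x
    rw [iteratedDeriv_succ, ih]
    exact (hasDerivAt_tsum_descFactorial_mul_pow hc k x).deriv

end PowerSeries

/-- The coefficient of `xⁿ` in `wrightW a b c d x`. -/
noncomputable def wrightCoeff (a b c d : ℝ) : ℕ → ℝ
  | 0 => 0
  | n + 1 => Gamma a * Gamma c / (Gamma (a + n * b) * Gamma (c + n * d))

section WrightCoeff

variable {a b c d : ℝ}

theorem wrightCoeff_zero (a b c d : ℝ) : wrightCoeff a b c d 0 = 0 := rfl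

theorem wrightCoeff_add_two (a b c d : ℝ) (n : ℕ) :
    wrightCoeff a b c d (n + 2) =
      Gamma a * Gamma c / (Gamma (a + ((n : ℝ) + 1) * b) * Gamma (c + ((n : ℝ) + 1) * d)) := by
  simp [wrightCoeff]

theorem wrightCoeff_one (ha : 0 < a) (hc : 0 < c) : wrightCoeff a b c d 1 = 1 := by
  simp [wrightCoeff, (Gamma_pos_of_pos ha).ne', (Gamma_pos_of_pos hc).ne']

variable (ha : 0 < a) (hc : 0 < c) (hb : 0 ≤ b) (hd : 0 ≤ d)
include ha hc hb hd

theorem wrightCoeff_nonneg (n : ℕ) : 0 ≤ wrightCoeff a b c d n := by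
  cases n with
  | zero => exact le_rfl
  | succ n =>
    have := Gamma_pos_of_pos ha; have := Gamma_pos_of_pos hc
    have := Gamma_pos_of_pos (by positivity : 0 < a + n * b)
    have := Gamma_pos_of_pos (by positivity : 0 < c + n * d)
    exact (div_pos (by positivity) (by positivity)).le

theorem exists_wrightCoeff_le_geometric (hbd : 0 < b + d) {r : ℝ} (hr : 0 < r) :
    ∃ K, 0 ≤ K ∧ ∀ n, wrightCoeff a b c d n ≤ K * r ^ n := by
  obtain ⟨L, hL, hLr⟩ : ∃ L : ℝ, 1 ≤ L ∧ r⁻¹ ≤ L ^ (b + d) := by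
    refine ⟨max 1 (r⁻¹ ^ (b + d)⁻¹), le_max_left _ _, ?_⟩
    calc r⁻¹ = (r⁻¹ ^ (b + d)⁻¹) ^ (b + d) := (rpow_inv_rpow (by positivity) hbd.ne').symm
      _ ≤ _ := rpow_le_rpow (by positivity) (le_max_right _ _) hbd.le
  have hL0 : 0 < L := by linarith
  set Q := L ^ (a + c - 2 * L - 2)
  have hΓ : 0 < Gamma a * Gamma c := mul_pos (Gamma_pos_of_pos ha) (Gamma_pos_of_pos hc)
  refine ⟨36 * (Gamma a * Gamma c) / Q / r, by positivity, fun n => ?_⟩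
  cases n with
  | zero => simpa [wrightCoeff_zero] using by positivity
  | succ n =>
    have hden : Q * r⁻¹ ^ n / 36 ≤ Gamma (a + n * b) * Gamma (c + n * d) :=
      calc Q * r⁻¹ ^ n / 36 ≤ Q * (L ^ (b + d)) ^ n / 36 := by gcongr
        _ = L ^ (a + c - 2 * L - 2 + (b + d) * n) / 36 := by
          rw [rpow_add hL0 _ ((b + d) * n), rpow_mul hL0.le, rpow_natCast]
        _ = L ^ (a + n * b - L - 1) / 6 * (L ^ (c + n * d - L - 1) / 6) := by
          rw [div_mul_div_comm, ← rpow_add hL0]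
          ring_nf
        _ ≤ _ := mul_le_mul (rpow_div_six_le_Gamma hL (by positivity))
            (rpow_div_six_le_Gamma hL (by positivity)) (by positivity)
            (Gamma_pos_of_pos (by positivity)).le
    calc wrightCoeff a b c d (n + 1) ≤ Gamma a * Gamma c / (Q * r⁻¹ ^ n / 36) :=
          div_le_div_of_nonneg_left hΓ.le (by positivity) hden
      _ = _ := by rw [inv_pow]; field_simp; ring

theorem summable_norm_wrightCoeff_mul_pow (hbd : 0 < b + d) (R : ℝ) :
    Summable fun n => ‖wrightCoeff a b c d n‖ * R ^ n := by
  obtain ⟨K, hK0, hK⟩ :=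
    exists_wrightCoeff_le_geometric ha hc hb hd hbd (r := (2 * (|R| + 1))⁻¹) (by positivity)
  refine .of_norm_bounded (summable_geometric_two.mul_left K) fun n => ?_
  have hR : |R| * (2 * (|R| + 1))⁻¹ ≤ 1 / 2 := by
    rw [← div_eq_mul_inv, div_le_iff₀ (by positivity)]; linarith
  calc ‖‖wrightCoeff a b c d n‖ * R ^ n‖ = wrightCoeff a b c d n * |R| ^ n := by
        rw [norm_mul, norm_norm, norm_of_nonneg (wrightCoeff_nonneg ha hc hb hd n), norm_pow,
          norm_eq_abs]
    _ ≤ K * (2 * (|R| + 1))⁻¹ ^ n * |R| ^ n := by gcongr; exact hK n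
    _ = K * (|R| * (2 * (|R| + 1))⁻¹) ^ n := by rw [mul_pow]; ring
    _ ≤ K * (1 / 2) ^ n := by gcongr

theorem wrightW_eq_tsum (hbd : 0 < b + d) :
    wrightW a b c d = fun x => ∑' n, wrightCoeff a b c d n * x ^ n := by
  ext x
  have hs : Summable fun n => wrightCoeff a b c d n * x ^ n :=
    .of_norm_bounded (summable_norm_wrightCoeff_mul_pow ha hc hb hd hbd |x|) fun n => by
      rw [norm_mul, norm_pow, norm_eq_abs x]
  rw [← hs.sum_add_tsum_nat_add 2]
  simp [wrightW, Finset.sum_range_succ, wrightCoeff_zero, wrightCoeff_one ha hc,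
    wrightCoeff_add_two]

theorem summable_descFactorial_mul_wrightCoeff (hbd : 0 < b + d) (k : ℕ) :
    Summable fun n => (n.descFactorial k : ℝ) * wrightCoeff a b c d n := by
  refine (summable_descFactorial_mul_norm_mul_pow
    (summable_norm_wrightCoeff_mul_pow ha hc hb hd hbd) k zero_le_one).congr fun n => ?_
  rw [norm_of_nonneg (wrightCoeff_nonneg ha hc hb hd n), one_pow, mul_one]

theorem iteratedDeriv_wrightW_one (hbd : 0 < b + d) (k : ℕ) :
    iteratedDeriv k (wrightW a b c d) 1 =
      ∑' n, (n.descFactorial k : ℝ) * wrightCoeff a b c d n := by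
  rw [wrightW_eq_tsum ha hc hb hd hbd,
    iteratedDeriv_tsum_mul_pow (summable_norm_wrightCoeff_mul_pow ha hc hb hd hbd)]
  simp

theorem hasSum_wrightCoeff_combination (hbd : 0 < b + d) (u v : ℝ) :
    HasSum (fun n : ℕ => (((n : ℝ) + 2) * ((n : ℝ) + 1) * n + u * ((n : ℝ) + 2) * ((n : ℝ) + 1)
        + v * ((n : ℝ) + 2)) * wrightCoeff a b c d (n + 2))
      (iteratedDeriv 3 (wrightW a b c d) 1 + u * iteratedDeriv 2 (wrightW a b c d) 1
        + v * (deriv (wrightW a b c d) 1 - 1)) := by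
  have hs := summable_descFactorial_mul_wrightCoeff ha hc hb hd hbd
  have hshift := fun k => (summable_nat_add_iff 2).2 (hs k)
  have hsplit : ∀ k, iteratedDeriv k (wrightW a b c d) 1 = (Nat.descFactorial 1 k : ℝ)
      + ∑' n, ((n + 2).descFactorial k : ℝ) * wrightCoeff a b c d (n + 2) := fun k => by
    rw [iteratedDeriv_wrightW_one ha hc hb hd hbd, ← (hs k).sum_add_tsum_nat_add 2]
    simp [Finset.sum_range_succ, wrightCoeff_zero, wrightCoeff_one ha hc]
  rw [← iteratedDeriv_one, hsplit, hsplit, hsplit, Nat.descFactorial_of_lt (by norm_num : 1 < 3),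
    Nat.descFactorial_of_lt (by norm_num : 1 < 2), Nat.descFactorial_self]
  simp only [Nat.cast_zero, zero_add, Nat.factorial_one, Nat.cast_one, add_sub_cancel_left]
  refine (((hshift 3).hasSum.add ((hshift 2).hasSum.mul_left u)).add
    ((hshift 1).hasSum.mul_left v)).congr_fun fun n => ?_
  simp [Nat.descFactorial_succ]
  ring

end WrightCoeff

section CoefficientBounds

variable {w : ℕ → ℝ} {α : ℝ}

theorem tsum_mul_norm_le_of_hasSum_of_norm_le_succ_div_two {A : ℕ → ℂ} {S : ℝ}
    (hw : ∀ n, 0 ≤ w n) (hα : α ≤ 2) (hA : ∀ n : ℕ, 1 ≤ n → ‖A n‖ ≤ ((n : ℝ) + 1) / 2)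
    (hS : HasSum (fun n : ℕ => (((n : ℝ) + 2) * ((n : ℝ) + 1) * n
      + (4 - α) * ((n : ℝ) + 2) * ((n : ℝ) + 1) + 2 * (1 - α) * ((n : ℝ) + 2)) * w (n + 2)) S) :
    ∑' n : ℕ, ((n : ℝ) + 2) * ((n : ℝ) + 2 - α) * w (n + 2) * ‖A (n + 2)‖ ≤ S / 2 := by
  have hαn : ∀ n : ℕ, 0 ≤ (n : ℝ) + 2 - α := fun n => by linarith [n.cast_nonneg (α := ℝ)]
  have hle : ∀ n : ℕ, ((n : ℝ) + 2) * ((n : ℝ) + 2 - α) * w (n + 2) * ‖A (n + 2)‖ ≤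
      (((n : ℝ) + 2) * ((n : ℝ) + 1) * n + (4 - α) * ((n : ℝ) + 2) * ((n : ℝ) + 1)
        + 2 * (1 - α) * ((n : ℝ) + 2)) * w (n + 2) / 2 := fun n => by
    have hAn : ‖A (n + 2)‖ ≤ ((n : ℝ) + 3) / 2 := by
      have := hA (n + 2) (by omega); push_cast at this; linarith
    calc _ ≤ ((n : ℝ) + 2) * ((n : ℝ) + 2 - α) * w (n + 2) * (((n : ℝ) + 3) / 2) := by
          have := hw (n + 2); have := hαn n; gcongr
      _ = _ := by ring
  have hS2 := hS.div_const 2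
  refine (Summable.tsum_le_tsum hle (hS2.summable.of_nonneg_of_le (fun n => ?_) hle)
    hS2.summable).trans_eq hS2.tsum_eq
  have := hw (n + 2); have := hαn n
  positivity

theorem tsum_mul_norm_le_of_hasSum_of_norm_le_pred_div_two {B : ℕ → ℂ} {S : ℝ}
    (hw : ∀ n, 0 ≤ w n) (hα : -1 ≤ α) (hB : ∀ n : ℕ, 1 ≤ n → ‖B n‖ ≤ ((n : ℝ) - 1) / 2)
    (hS : HasSum (fun n : ℕ => (((n : ℝ) + 2) * ((n : ℝ) + 1) * n
      + (2 + α) * ((n : ℝ) + 2) * ((n : ℝ) + 1)) * w (n + 2)) S) :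
    ∑' n : ℕ, ((n : ℝ) + 1) * ((n : ℝ) + 1 + α) * w (n + 1) * ‖B (n + 1)‖ ≤ S / 2 := by
  have hαn : ∀ n : ℕ, 0 ≤ (n : ℝ) + 1 + α := fun n => by linarith [n.cast_nonneg (α := ℝ)]
  set g : ℕ → ℝ := fun n => ((n : ℝ) + 1) * ((n : ℝ) + 1 + α) * w (n + 1) * ((n : ℝ) / 2)
  have hg : HasSum g (S / 2) := by
    refine (hasSum_nat_add_iff' 1).1 ?_
    simp only [g, Finset.range_one, Finset.sum_singleton, Nat.cast_zero, zero_div, mul_zero,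
      sub_zero]
    exact (hS.div_const 2).congr_fun fun n => by push_cast; ring
  have hle : ∀ n : ℕ, ((n : ℝ) + 1) * ((n : ℝ) + 1 + α) * w (n + 1) * ‖B (n + 1)‖ ≤ g n :=
    fun n => by
      have hBn : ‖B (n + 1)‖ ≤ (n : ℝ) / 2 := by
        have := hB (n + 1) (by omega); push_cast at this; linarith
      have := hw (n + 1); have := hαn n
      exact mul_le_mul_of_nonneg_left hBn (by positivity)
  refine (Summable.tsum_le_tsum hle (hg.summable.of_nonneg_of_le (fun n => ?_) hle)
    hg.summable).trans_eq hg.tsum_eq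
  have := hw (n + 1); have := hαn n
  positivity

end CoefficientBounds

theorem Lf_convex_to_convex_coefficient_estimate_general (α₁ β₁ γ₁ δ₁ α₂ β₂ γ₂ δ₂ α : ℝ) (σ : ℂ) (A B : ℕ → ℂ)
    (hβ₁ : 0 ≤ β₁) (hδ₁ : 0 ≤ δ₁) (hβδ₁ : 0 < β₁ + δ₁)
    (hβ₂ : 0 ≤ β₂) (hδ₂ : 0 ≤ δ₂) (hβδ₂ : 0 < β₂ + δ₂)
    (hα₁ : 0 < α₁) (hγ₁ : 0 < γ₁) (hα₂ : 0 < α₂) (hγ₂ : 0 < γ₂)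
    (hα0 : 0 ≤ α) (hα1 : α < 1)
    (hA : ∀ n : ℕ, 1 ≤ n → ‖A n‖ ≤ ((n : ℝ) + 1) / 2)
    (hB : ∀ n : ℕ, 1 ≤ n → ‖B n‖ ≤ ((n : ℝ) - 1) / 2)
    (hyp : (iteratedDeriv 3 (wrightW α₁ β₁ γ₁ δ₁) 1
          + (4 - α) * iteratedDeriv 2 (wrightW α₁ β₁ γ₁ δ₁) 1
          + 2 * (1 - α) * (deriv (wrightW α₁ β₁ γ₁ δ₁) 1 - 1))
        + ‖σ‖ * (iteratedDeriv 3 (wrightW α₂ β₂ γ₂ δ₂) 1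
          + (2 + α) * iteratedDeriv 2 (wrightW α₂ β₂ γ₂ δ₂) 1)
        ≤ 2 * (1 - α)) :
    (∑' n : ℕ, ((n : ℝ) + 2) * ((n : ℝ) + 2 - α) *
        (Real.Gamma α₁ * Real.Gamma γ₁ /
          (Real.Gamma (α₁ + ((n : ℝ) + 1) * β₁) * Real.Gamma (γ₁ + ((n : ℝ) + 1) * δ₁))) * ‖A (n + 2)‖)
      + ‖σ‖ * ∑' n : ℕ, ((n : ℝ) + 1) * ((n : ℝ) + 1 + α) *
        (Real.Gamma α₂ * Real.Gamma γ₂ /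
          (Real.Gamma (α₂ + (n : ℝ) * β₂) * Real.Gamma (γ₂ + (n : ℝ) * δ₂))) * ‖B (n + 1)‖
      ≤ 1 - α := by
  have hW₁ := hasSum_wrightCoeff_combination hα₁ hγ₁ hβ₁ hδ₁ hβδ₁ (4 - α) (2 * (1 - α))
  have hW₂ := hasSum_wrightCoeff_combination hα₂ hγ₂ hβ₂ hδ₂ hβδ₂ (2 + α) 0
  simp only [zero_mul, add_zero] at hW₂
  have hA' := tsum_mul_norm_le_of_hasSum_of_norm_le_succ_div_two
    (wrightCoeff_nonneg hα₁ hγ₁ hβ₁ hδ₁) (by linarith) hA hW₁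
  have hB' := tsum_mul_norm_le_of_hasSum_of_norm_le_pred_div_two
    (wrightCoeff_nonneg hα₂ hγ₂ hβ₂ hδ₂) (by linarith) hB hW₂
  simp only [← wrightCoeff_add_two]
  exact (add_le_add hA' (mul_le_mul_of_nonneg_left hB' (norm_nonneg σ))).trans (by linarith)

/-- if f ∈ K_H^o (so |Aₙ| ≤ (n+1)/2 and |Bₙ| ≤ (n−1)/2) and the
stated Wright-function inequality holds, then L(f) satisfies the harmonic
convexity coefficient condition of order α. -/
theorem Lf_convex_to_convex_coefficient_estimate (α₁ β₁ γ₁ δ₁ α₂ β₂ γ₂ δ₂ α : ℝ) (σ : ℂ) (A B : ℕ → ℂ)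
    (hβ₁ : 0 ≤ β₁) (hδ₁ : 0 ≤ δ₁) (hβδ₁ : 0 < β₁ + δ₁)
    (hβ₂ : 0 ≤ β₂) (hδ₂ : 0 ≤ δ₂) (hβδ₂ : 0 < β₂ + δ₂)
    (hα₁ : 0 < α₁) (hγ₁ : 0 < γ₁) (hα₂ : 0 < α₂) (hγ₂ : 0 < γ₂)
    (hσ : ‖σ‖ < 1) (hα0 : 0 ≤ α) (hα1 : α < 1)
    (hA : ∀ n : ℕ, 1 ≤ n → ‖A n‖ ≤ ((n : ℝ) + 1) / 2)
    (hB : ∀ n : ℕ, 1 ≤ n → ‖B n‖ ≤ ((n : ℝ) - 1) / 2)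
    (hyp : (iteratedDeriv 3 (wrightW α₁ β₁ γ₁ δ₁) 1
          + (4 - α) * iteratedDeriv 2 (wrightW α₁ β₁ γ₁ δ₁) 1
          + 2 * (1 - α) * (deriv (wrightW α₁ β₁ γ₁ δ₁) 1 - 1))
        + ‖σ‖ * (iteratedDeriv 3 (wrightW α₂ β₂ γ₂ δ₂) 1
          + (2 + α) * iteratedDeriv 2 (wrightW α₂ β₂ γ₂ δ₂) 1)
        ≤ 2 * (1 - α)) :
    (∑' n : ℕ, ((n : ℝ) + 2) * ((n : ℝ) + 2 - α) *
        (Real.Gamma α₁ * Real.Gamma γ₁ /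
          (Real.Gamma (α₁ + ((n : ℝ) + 1) * β₁) * Real.Gamma (γ₁ + ((n : ℝ) + 1) * δ₁))) * ‖A (n + 2)‖)
      + ‖σ‖ * ∑' n : ℕ, ((n : ℝ) + 1) * ((n : ℝ) + 1 + α) *
        (Real.Gamma α₂ * Real.Gamma γ₂ /
          (Real.Gamma (α₂ + (n : ℝ) * β₂) * Real.Gamma (γ₂ + (n : ℝ) * δ₂))) * ‖B (n + 1)‖
      ≤ 1 - α :=
  Lf_convex_to_convex_coefficient_estimate_general α₁ β₁ γ₁ δ₁ α₂ β₂ γ₂ δ₂ α σ A B hβ₁ hδ₁ hβδ₁ hβ₂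
    hδ₂ hβδ₂ hα₁ hγ₁ hα₂ hγ₂ hα0 hα1 hA hB hyp
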